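/- arXiv:2601.05795 — 10 statements merged into one kernel-verified Lean document; each statement's English description precedes it below -/
import Mathlib

section
/- For any three normalized circle quadruples K₁, K₂, K₃, one has 4U = Δ₂² + Δ₃² − Δ₁Δ₄. -/
/-!
Write `⟪K, L⟫ = b b' + c c' - (a d' + a' d) / 2` for the Lorentzian form of signature `(3, 1)`
whose quadratic form is `b² + c² - a d`. Then `Q(K, L) = (1 - ⟪K, L⟫) / 2`, and substituting this
into `U` gives `4 U = -det G`, where `G` is the Gram matrix of the unit vectors `K₁, K₂, K₃`.
Writing `G = M J Mᵀ`, with `M` the `3 × 4` matrix of rows `Kᵢ` and `J` the matrix of the form,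
the Cauchy–Binet formula expresses `det G` through the `3 × 3` minors of `M`; only the pairs of
minors matched by `J` (`a ↔ d`, `b ↔ b`, `c ↔ c`) survive, giving `Δ₁ Δ₄ - Δ₂² - Δ₃²`.
-/

open Matrix

noncomputable def lorentzMatrix : Matrix (Fin 4) (Fin 4) ℝ :=
  !![0, 0, 0, -1/2; 0, 1, 0, 0; 0, 0, 1, 0; -1/2, 0, 0, 0]

theorem mul_lorentzMatrix_mul_transpose_apply {n : Type*} (M : Matrix n (Fin 4) ℝ) (i j : n) :
    (M * lorentzMatrix * Mᵀ) i j =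
      M i 1 * M j 1 + M i 2 * M j 2 - (M i 0 * M j 3 + M j 0 * M i 3) / 2 := by
  simp only [lorentzMatrix, mul_apply, transpose_apply, Fin.sum_univ_four, of_apply, cons_val',
    cons_val_fin_one, cons_val_zero, cons_val_one, cons_val, mul_zero, add_zero, zero_add, mul_one]
  ring

theorem det_mul_lorentzMatrix_mul_transpose (M : Matrix (Fin 3) (Fin 4) ℝ) :
    (M * lorentzMatrix * Mᵀ).det =
      -((M.submatrix id ![0, 1, 2]).det * (M.submatrix id ![1, 2, 3]).det
        + (M.submatrix id ![0, 2, 3]).det ^ 2 / 4 + (M.submatrix id ![0, 1, 3]).det ^ 2 / 4) := by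
  simp only [det_fin_three, mul_lorentzMatrix_mul_transpose_apply, submatrix_apply, id,
    cons_val_zero, cons_val_one, cons_val]
  ring

theorem four_mul_U_eq_neg_det (Q₁ Q₂ Q₃ : ℝ) :
    4 * (Q₁*(Q₁-2*Q₂) + Q₂*(Q₂-2*Q₃) + Q₃*(Q₃-2*Q₁) + 4*Q₁*Q₂*Q₃) =
      -(!![1, 1 - 2*Q₁, 1 - 2*Q₃; 1 - 2*Q₁, 1, 1 - 2*Q₂; 1 - 2*Q₃, 1 - 2*Q₂, 1] :
        Matrix (Fin 3) (Fin 3) ℝ).det := by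
  rw [det_fin_three]
  simp only [of_apply, cons_val', cons_val_fin_one, cons_val_zero, cons_val_one, cons_val]
  ring

theorem stmt_1
    (a₁ b₁ c₁ d₁ a₂ b₂ c₂ d₂ a₃ b₃ c₃ d₃ : ℝ)
    (h₁ : b₁^2 + c₁^2 - a₁*d₁ = 1)
    (h₂ : b₂^2 + c₂^2 - a₂*d₂ = 1)
    (h₃ : b₃^2 + c₃^2 - a₃*d₃ = 1)
    (Q₁ Q₂ Q₃ : ℝ)
    (hQ₁ : 4*Q₁ = 2 + a₁*d₂ + a₂*d₁ - 2*(b₁*b₂ + c₁*c₂))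
    (hQ₂ : 4*Q₂ = 2 + a₂*d₃ + a₃*d₂ - 2*(b₂*b₃ + c₂*c₃))
    (hQ₃ : 4*Q₃ = 2 + a₃*d₁ + a₁*d₃ - 2*(b₃*b₁ + c₃*c₁))
    (U : ℝ)
    (hU : U = Q₁*(Q₁-2*Q₂) + Q₂*(Q₂-2*Q₃) + Q₃*(Q₃-2*Q₁) + 4*Q₁*Q₂*Q₃)
    (Δ₁ Δ₂ Δ₃ Δ₄ : ℝ)
    (hΔ₁ : Δ₁ = -Matrix.det !![b₁,c₁,d₁; b₂,c₂,d₂; b₃,c₃,d₃])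
    (hΔ₂ : Δ₂ = -(1/2) * Matrix.det !![a₁,c₁,d₁; a₂,c₂,d₂; a₃,c₃,d₃])
    (hΔ₃ : Δ₃ = (1/2) * Matrix.det !![a₁,b₁,d₁; a₂,b₂,d₂; a₃,b₃,d₃])
    (hΔ₄ : Δ₄ = Matrix.det !![a₁,b₁,c₁; a₂,b₂,c₂; a₃,b₃,c₃]) :
    4*U = Δ₂^2 + Δ₃^2 - Δ₁*Δ₄ := by
  set M : Matrix (Fin 3) (Fin 4) ℝ := !![a₁, b₁, c₁, d₁; a₂, b₂, c₂, d₂; a₃, b₃, c₃, d₃]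
  have hgram : M * lorentzMatrix * Mᵀ =
      !![1, 1 - 2*Q₁, 1 - 2*Q₃; 1 - 2*Q₁, 1, 1 - 2*Q₂; 1 - 2*Q₃, 1 - 2*Q₂, 1] := by
    ext i j
    rw [mul_lorentzMatrix_mul_transpose_apply]
    fin_cases i <;> fin_cases j <;> simp [M] <;> linarith
  obtain ⟨hM₁, hM₂, hM₃, hM₄⟩ :
      M.submatrix id ![1, 2, 3] = !![b₁, c₁, d₁; b₂, c₂, d₂; b₃, c₃, d₃] ∧
      M.submatrix id ![0, 2, 3] = !![a₁, c₁, d₁; a₂, c₂, d₂; a₃, c₃, d₃] ∧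
      M.submatrix id ![0, 1, 3] = !![a₁, b₁, d₁; a₂, b₂, d₂; a₃, b₃, d₃] ∧
      M.submatrix id ![0, 1, 2] = !![a₁, b₁, c₁; a₂, b₂, c₂; a₃, b₃, c₃] := by
    refine ⟨?_, ?_, ?_, ?_⟩ <;> ext i j <;> fin_cases i <;> fin_cases j <;> rfl
  rw [hU, four_mul_U_eq_neg_det, ← hgram, det_mul_lorentzMatrix_mul_transpose,
    hM₁, hM₂, hM₃, hM₄, hΔ₁, hΔ₂, hΔ₃, hΔ₄]
  ring
end

section
/- For any three normalized circle quadruples K₁, K₂, K₃, one has V² − U·W = Δ₄²·Q₁Q₂Q₃. -/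
/-!
Let `⟪K, L⟫ = b b' + c c' - (a d' + a' d) / 2` be the Lorentzian form on `ℝ⁴` with Gram matrix `J`,
so that `⟪Kᵢ, Kᵢ⟫ = 1`, `⟪Kᵢ, Kⱼ⟫ = 1 - 2 Q(Kᵢ, Kⱼ)`, and the null vector `n = (0, 0, 0, -2)` has
`⟪Kᵢ, n⟫ = aᵢ`. The Gram determinant of `(K₁, K₂, K₃, n)` is `det(K₁, K₂, K₃, n)² · det J = -Δ₄²`.
It is also the determinant of the Gram matrix `G` of `(K₁, K₂, K₃)` bordered by `a`, which is
`-aᵀ adj(G) a`. Hence `Δ₄² = aᵀ adj(G) a`, and `V² - U W = Q₁ Q₂ Q₃ · aᵀ adj(G) a` is a polynomial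
identity in the `aᵢ` and `Qᵢ`.
-/

open Matrix

noncomputable def inversiveForm : Matrix (Fin 4) (Fin 4) ℝ :=
  !![0, 0, 0, -1/2; 0, 1, 0, 0; 0, 0, 1, 0; -1/2, 0, 0, 0]

lemma det_inversiveForm : inversiveForm.det = -1/4 := by
  simp [inversiveForm, det_succ_row_zero, Fin.sum_univ_succ, Fin.succAbove]
  norm_num

lemma det_mul_inversiveForm_mul_transpose (M : Matrix (Fin 4) (Fin 4) ℝ) :
    (M * inversiveForm * Mᵀ).det = -M.det ^ 2 / 4 := by
  rw [det_mul, det_mul, det_transpose, det_inversiveForm]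
  ring

def inversiveGram (Q₁ Q₂ Q₃ : ℝ) : Matrix (Fin 3) (Fin 3) ℝ :=
  !![1, 1 - 2*Q₁, 1 - 2*Q₃; 1 - 2*Q₁, 1, 1 - 2*Q₂; 1 - 2*Q₃, 1 - 2*Q₂, 1]

def bordered {α : Type*} [Zero α] (A : Matrix (Fin 3) (Fin 3) α) (u v : Fin 3 → α) :
    Matrix (Fin 4) (Fin 4) α :=
  !![A 0 0, A 0 1, A 0 2, u 0; A 1 0, A 1 1, A 1 2, u 1; A 2 0, A 2 1, A 2 2, u 2; v 0, v 1, v 2, 0]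

lemma det_bordered {R : Type*} [CommRing R] (A : Matrix (Fin 3) (Fin 3) R) (u v : Fin 3 → R) :
    (bordered A u v).det = -(v ⬝ᵥ A.adjugate *ᵥ u) := by
  simp [bordered, det_succ_row_zero, Fin.sum_univ_succ, Fin.succAbove, adjugate_fin_three,
    dotProduct, mulVec]
  ring

theorem det_sq_eq_dotProduct_adjugate_inversiveGram
    (a₁ b₁ c₁ d₁ a₂ b₂ c₂ d₂ a₃ b₃ c₃ d₃ : ℝ)
    (h₁ : b₁^2 + c₁^2 - a₁*d₁ = 1)
    (h₂ : b₂^2 + c₂^2 - a₂*d₂ = 1)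
    (h₃ : b₃^2 + c₃^2 - a₃*d₃ = 1)
    (Q₁ Q₂ Q₃ : ℝ)
    (hQ₁ : 4*Q₁ = 2 + a₁*d₂ + a₂*d₁ - 2*(b₁*b₂ + c₁*c₂))
    (hQ₂ : 4*Q₂ = 2 + a₂*d₃ + a₃*d₂ - 2*(b₂*b₃ + c₂*c₃))
    (hQ₃ : 4*Q₃ = 2 + a₃*d₁ + a₁*d₃ - 2*(b₃*b₁ + c₃*c₁)) :
    (!![a₁, b₁, c₁; a₂, b₂, c₂; a₃, b₃, c₃].det) ^ 2 =
      ![a₁, a₂, a₃] ⬝ᵥ (inversiveGram Q₁ Q₂ Q₃).adjugate *ᵥ ![a₁, a₂, a₃] := by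
  set M : Matrix (Fin 4) (Fin 4) ℝ :=
    !![a₁, b₁, c₁, d₁; a₂, b₂, c₂, d₂; a₃, b₃, c₃, d₃; 0, 0, 0, -2]
  have det_M : M.det = -2 * !![a₁, b₁, c₁; a₂, b₂, c₂; a₃, b₃, c₃].det := by
    simp [M, det_succ_row_zero, Fin.sum_univ_succ, Fin.succAbove]
    ring
  have gram_M : M * inversiveForm * Mᵀ =
      bordered (inversiveGram Q₁ Q₂ Q₃) ![a₁, a₂, a₃] ![a₁, a₂, a₃] := by
    ext i j
    fin_cases i <;> fin_cases j <;>
      simp [M, inversiveForm, bordered, inversiveGram, mul_apply, Fin.sum_univ_four] <;> linarith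
  have gram_det := det_mul_inversiveForm_mul_transpose M
  rw [gram_M, det_bordered, det_M] at gram_det
  linarith

theorem stmt_3
    (a₁ b₁ c₁ d₁ a₂ b₂ c₂ d₂ a₃ b₃ c₃ d₃ : ℝ)
    (h₁ : b₁^2 + c₁^2 - a₁*d₁ = 1)
    (h₂ : b₂^2 + c₂^2 - a₂*d₂ = 1)
    (h₃ : b₃^2 + c₃^2 - a₃*d₃ = 1)
    (Q₁ Q₂ Q₃ : ℝ)
    (hQ₁ : 4*Q₁ = 2 + a₁*d₂ + a₂*d₁ - 2*(b₁*b₂ + c₁*c₂))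
    (hQ₂ : 4*Q₂ = 2 + a₂*d₃ + a₃*d₂ - 2*(b₂*b₃ + c₂*c₃))
    (hQ₃ : 4*Q₃ = 2 + a₃*d₁ + a₁*d₃ - 2*(b₃*b₁ + c₃*c₁))
    (U : ℝ)
    (hU : U = Q₁*(Q₁-2*Q₂) + Q₂*(Q₂-2*Q₃) + Q₃*(Q₃-2*Q₁) + 4*Q₁*Q₂*Q₃)
    (v₁ v₂ v₃ V : ℝ)
    (hv₁ : v₁ = Q₁*(Q₁-Q₂-Q₃))
    (hv₂ : v₂ = Q₂*(Q₂-Q₃-Q₁))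
    (hv₃ : v₃ = Q₃*(Q₃-Q₁-Q₂))
    (hV : V = a₁*v₂ + a₂*v₃ + a₃*v₁)
    (W : ℝ)
    (hW : W = a₁*Q₂*(a₁*Q₂-2*a₂*Q₃) + a₂*Q₃*(a₂*Q₃-2*a₃*Q₁) + a₃*Q₁*(a₃*Q₁-2*a₁*Q₂))
    (Δ₄ : ℝ)
    (hΔ₄ : Δ₄ = Matrix.det !![a₁,b₁,c₁; a₂,b₂,c₂; a₃,b₃,c₃]) :
    V^2 - U*W = Δ₄^2*(Q₁*Q₂*Q₃) := by
  rw [hΔ₄, det_sq_eq_dotProduct_adjugate_inversiveGram a₁ b₁ c₁ d₁ a₂ b₂ c₂ d₂ a₃ b₃ c₃ d₃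
    h₁ h₂ h₃ Q₁ Q₂ Q₃ hQ₁ hQ₂ hQ₃, hU, hV, hW, hv₁, hv₂, hv₃]
  simp [inversiveGram, adjugate_fin_three, dotProduct, mulVec, Fin.sum_univ_three]
  ring
end

section
/- Let K₁, K₂, K₃ be three normalized circle quadruples with U ≠ 0 and Q₁Q₂Q₃ ≥ 0, let ε ∈ {1,−1}, and set r = √(Q₁Q₂Q₃). Define a₀ = (a₁v₂+a₂v₃+a₃v₁ + ε·Δ₄·r)/U, b₀ = (b₁v₂+b₂v₃+b₃v₁ + ε·Δ₂·r)/U, c₀ = (c₁v₂+c₂v₃+c₃v₁ + ε·Δ₃·r)/U, d₀ = (d₁v₂+d₂v₃+d₃v₁ + ε·Δ₁·r)/U. Then b₀² + c₀² − a₀d₀ = 1, and for each i ∈ {1,2,3}: 2b₀b_i + 2c₀c_i − a₀d_i − a_id₀ = 2 (i.e., the circle K₀ = (a₀,b₀,c₀,d₀) is tangent to each given circle, Q(K₀,K_i) = 0). -/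
/-!
Write `polar` for the polar form of `quad K = b² + c² − a d`, so that `4 Q(K, L) = 2 − polar K L`
for normalized `K, L` and tangency means `polar K₀ Kᵢ = 2`. The quadruple `N = (Δ₄, Δ₂, Δ₃, Δ₁)`
is the cross product of `K₁, K₂, K₃` for this form: `polar N L` is, up to sign, the `4 × 4`
determinant with rows `K₁, K₂, K₃, L`, so `N` is orthogonal to the three circles, and `polar N N`
is a multiple of their Gram determinant, a polynomial in the `Qᵢ`. Hence for
`T = v₂ K₁ + v₃ K₂ + v₁ K₃ + ε r N` every pairing `polar T Kᵢ` and `polar T T` is a polynomial in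
the `Qᵢ` and `ε r`; they come out as `2 U` and `2 U²` once `(ε r)² = Q₁ Q₂ Q₃`, so `K₀ = T / U`
is normalized and tangent to each `Kᵢ`.
-/

@[ext]
structure CircleQuad where
  a : ℝ
  b : ℝ
  c : ℝ
  d : ℝ

namespace CircleQuad

@[simps]
instance : Add CircleQuad := ⟨fun K L => ⟨K.a + L.a, K.b + L.b, K.c + L.c, K.d + L.d⟩⟩

@[simps]
instance : SMul ℝ CircleQuad := ⟨fun t K => ⟨t * K.a, t * K.b, t * K.c, t * K.d⟩⟩

def quad (K : CircleQuad) : ℝ := K.b ^ 2 + K.c ^ 2 - K.a * K.d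

def polar (K L : CircleQuad) : ℝ := 2 * K.b * L.b + 2 * K.c * L.c - K.a * L.d - L.a * K.d

theorem polar_self (K : CircleQuad) : polar K K = 2 * quad K := by
  unfold polar quad; ring

theorem polar_comm (K L : CircleQuad) : polar K L = polar L K := by
  unfold polar; ring

theorem polar_add_left (K L M : CircleQuad) : polar (K + L) M = polar K M + polar L M := by
  simp only [polar, add_a, add_b, add_c, add_d]; ring

theorem polar_smul_left (t : ℝ) (K L : CircleQuad) : polar (t • K) L = t * polar K L := by
  simp only [polar, smul_a, smul_b, smul_c, smul_d]; ring

theorem polar_add_right (K L M : CircleQuad) : polar K (L + M) = polar K L + polar K M := by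
  rw [polar_comm, polar_add_left, polar_comm L, polar_comm M]

theorem polar_smul_right (t : ℝ) (K L : CircleQuad) : polar K (t • L) = t * polar K L := by
  rw [polar_comm, polar_smul_left, polar_comm]

def toVec (K : CircleQuad) : Fin 4 → ℝ := ![K.a, K.b, K.c, K.d]

noncomputable def cross (K₁ K₂ K₃ : CircleQuad) : CircleQuad where
  a := Matrix.det !![K₁.a, K₁.b, K₁.c; K₂.a, K₂.b, K₂.c; K₃.a, K₃.b, K₃.c]
  b := -(1/2) * Matrix.det !![K₁.a, K₁.c, K₁.d; K₂.a, K₂.c, K₂.d; K₃.a, K₃.c, K₃.d]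
  c := (1/2) * Matrix.det !![K₁.a, K₁.b, K₁.d; K₂.a, K₂.b, K₂.d; K₃.a, K₃.b, K₃.d]
  d := -Matrix.det !![K₁.b, K₁.c, K₁.d; K₂.b, K₂.c, K₂.d; K₃.b, K₃.c, K₃.d]

theorem polar_cross (K₁ K₂ K₃ L : CircleQuad) :
    polar (cross K₁ K₂ K₃) L = -(Matrix.of ![K₁.toVec, K₂.toVec, K₃.toVec, L.toVec]).det := by
  rw [Matrix.det_succ_row_zero]
  simp only [polar, cross, toVec, Fin.sum_univ_four, Matrix.det_fin_three, Matrix.submatrix_apply,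
    Matrix.of_apply, Matrix.cons_val', Matrix.cons_val_zero, Matrix.cons_val_one, Matrix.cons_val,
    Matrix.cons_val_fin_one, Fin.succAbove_of_castSucc_lt, Fin.succAbove_of_le_castSucc,
    Fin.reduceSucc, Fin.reduceCastSucc, Fin.reduceLT, Fin.reduceLE, Fin.isValue, Fin.coe_ofNat_eq_mod]
  ring

theorem polar_cross_eq_zero {K₁ K₂ K₃ L : CircleQuad} (hL : L = K₁ ∨ L = K₂ ∨ L = K₃) :
    polar (cross K₁ K₂ K₃) L = 0 := by
  rw [polar_cross, neg_eq_zero]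
  rcases hL with rfl | rfl | rfl
  · exact Matrix.det_zero_of_row_eq (i := 0) (j := 3) (by decide) rfl
  · exact Matrix.det_zero_of_row_eq (i := 1) (j := 3) (by decide) rfl
  · exact Matrix.det_zero_of_row_eq (i := 2) (j := 3) (by decide) rfl

theorem polar_cross_cross (K₁ K₂ K₃ : CircleQuad) :
    polar (cross K₁ K₂ K₃) (cross K₁ K₂ K₃) = -(1/4) * Matrix.det
      !![polar K₁ K₁, polar K₁ K₂, polar K₁ K₃;
         polar K₂ K₁, polar K₂ K₂, polar K₂ K₃;
         polar K₃ K₁, polar K₃ K₂, polar K₃ K₃] := by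
  simp only [polar, cross, Matrix.det_fin_three, Matrix.of_apply, Matrix.cons_val',
    Matrix.cons_val_zero, Matrix.cons_val_one, Matrix.cons_val, Matrix.cons_val_fin_one]
  ring

def tangentScale (Q₁ Q₂ Q₃ : ℝ) : ℝ :=
  Q₁ * (Q₁ - 2 * Q₂) + Q₂ * (Q₂ - 2 * Q₃) + Q₃ * (Q₃ - 2 * Q₁) + 4 * Q₁ * Q₂ * Q₃

noncomputable def tangentCombination (K₁ K₂ K₃ : CircleQuad) (Q₁ Q₂ Q₃ s : ℝ) : CircleQuad :=
  (Q₂ * (Q₂ - Q₃ - Q₁)) • K₁ + (Q₃ * (Q₃ - Q₁ - Q₂)) • K₂ + (Q₁ * (Q₁ - Q₂ - Q₃)) • K₃ +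
    s • cross K₁ K₂ K₃

section Normalized

variable {K₁ K₂ K₃ : CircleQuad} {Q₁ Q₂ Q₃ : ℝ}
  (h₁ : quad K₁ = 1) (h₂ : quad K₂ = 1) (h₃ : quad K₃ = 1)
  (hQ₁ : polar K₁ K₂ = 2 - 4 * Q₁) (hQ₂ : polar K₂ K₃ = 2 - 4 * Q₂)
  (hQ₃ : polar K₃ K₁ = 2 - 4 * Q₃)
include h₁ h₂ h₃ hQ₁ hQ₂ hQ₃

theorem polar_cross_cross_of_quad_eq_one :
    polar (cross K₁ K₂ K₃) (cross K₁ K₂ K₃) = 2 * ((1 - 2 * Q₁) ^ 2 + (1 - 2 * Q₂) ^ 2 +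
      (1 - 2 * Q₃) ^ 2 - 2 * (1 - 2 * Q₁) * (1 - 2 * Q₂) * (1 - 2 * Q₃) - 1) := by
  rw [polar_cross_cross, polar_self, polar_self, polar_self, h₁, h₂, h₃, polar_comm K₂ K₁,
    polar_comm K₃ K₂, polar_comm K₁ K₃, hQ₁, hQ₂, hQ₃, Matrix.det_fin_three]
  simp only [Matrix.of_apply, Matrix.cons_val', Matrix.cons_val_zero, Matrix.cons_val_one,
    Matrix.cons_val, Matrix.cons_val_fin_one]
  ring

theorem polar_tangentCombination (s : ℝ) :
    polar (tangentCombination K₁ K₂ K₃ Q₁ Q₂ Q₃ s) K₁ = 2 * tangentScale Q₁ Q₂ Q₃ ∧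
    polar (tangentCombination K₁ K₂ K₃ Q₁ Q₂ Q₃ s) K₂ = 2 * tangentScale Q₁ Q₂ Q₃ ∧
    polar (tangentCombination K₁ K₂ K₃ Q₁ Q₂ Q₃ s) K₃ = 2 * tangentScale Q₁ Q₂ Q₃ := by
  simp only [tangentCombination, tangentScale, polar_add_left, polar_smul_left,
    polar_cross_eq_zero (.inl rfl), polar_cross_eq_zero (.inr (.inl rfl)),
    polar_cross_eq_zero (.inr (.inr rfl)), polar_self, h₁, h₂, h₃, hQ₁, hQ₂, hQ₃,
    polar_comm K₂ K₁, polar_comm K₃ K₂, polar_comm K₁ K₃]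
  refine ⟨?_, ?_, ?_⟩ <;> ring

theorem polar_tangentCombination_self {s : ℝ} (hs : s ^ 2 = Q₁ * Q₂ * Q₃) :
    polar (tangentCombination K₁ K₂ K₃ Q₁ Q₂ Q₃ s) (tangentCombination K₁ K₂ K₃ Q₁ Q₂ Q₃ s) =
      2 * tangentScale Q₁ Q₂ Q₃ ^ 2 := by
  have hN := polar_cross_cross_of_quad_eq_one h₁ h₂ h₃ hQ₁ hQ₂ hQ₃
  simp only [tangentCombination, polar_add_left, polar_add_right, polar_smul_left,
    polar_smul_right, hN, polar_cross_eq_zero (.inl rfl), polar_cross_eq_zero (.inr (.inl rfl)),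
    polar_cross_eq_zero (.inr (.inr rfl)), polar_comm K₁ (cross K₁ K₂ K₃),
    polar_comm K₂ (cross K₁ K₂ K₃), polar_comm K₃ (cross K₁ K₂ K₃)]
  simp only [polar_self, h₁, h₂, h₃, hQ₁, hQ₂, hQ₃, polar_comm K₂ K₁, polar_comm K₃ K₂,
    polar_comm K₁ K₃, tangentScale]
  linear_combination 2 * ((1 - 2 * Q₁) ^ 2 + (1 - 2 * Q₂) ^ 2 +
      (1 - 2 * Q₃) ^ 2 - 2 * (1 - 2 * Q₁) * (1 - 2 * Q₂) * (1 - 2 * Q₃) - 1) * hs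

theorem quad_eq_one_and_polar_eq_two_of_tangentCombination {s : ℝ} {K₀ : CircleQuad}
    (hs : s ^ 2 = Q₁ * Q₂ * Q₃) (hU : tangentScale Q₁ Q₂ Q₃ ≠ 0)
    (hK₀ : K₀ = (tangentScale Q₁ Q₂ Q₃)⁻¹ • tangentCombination K₁ K₂ K₃ Q₁ Q₂ Q₃ s) :
    quad K₀ = 1 ∧ polar K₀ K₁ = 2 ∧ polar K₀ K₂ = 2 ∧ polar K₀ K₃ = 2 := by
  obtain ⟨hT₁, hT₂, hT₃⟩ := polar_tangentCombination h₁ h₂ h₃ hQ₁ hQ₂ hQ₃ s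
  have hTT := polar_tangentCombination_self h₁ h₂ h₃ hQ₁ hQ₂ hQ₃ hs
  have hK₀_polar {L : CircleQuad}
      (hL : polar (tangentCombination K₁ K₂ K₃ Q₁ Q₂ Q₃ s) L = 2 * tangentScale Q₁ Q₂ Q₃) :
      polar K₀ L = 2 := by
    rw [hK₀, polar_smul_left, hL]
    field_simp
  have hK₀_quad : quad K₀ = 1 := by
    rw [← mul_right_inj' (two_ne_zero (α := ℝ)), ← polar_self, hK₀, polar_smul_left,
      polar_smul_right, hTT]
    field_simp
  exact ⟨hK₀_quad, hK₀_polar hT₁, hK₀_polar hT₂, hK₀_polar hT₃⟩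

end Normalized

end CircleQuad

open CircleQuad in
theorem stmt_4_general
    (a₁ b₁ c₁ d₁ a₂ b₂ c₂ d₂ a₃ b₃ c₃ d₃ : ℝ)
    (h₁ : b₁^2 + c₁^2 - a₁*d₁ = 1)
    (h₂ : b₂^2 + c₂^2 - a₂*d₂ = 1)
    (h₃ : b₃^2 + c₃^2 - a₃*d₃ = 1)
    (Q₁ Q₂ Q₃ : ℝ)
    (hQ₁ : 4*Q₁ = 2 + a₁*d₂ + a₂*d₁ - 2*(b₁*b₂ + c₁*c₂))
    (hQ₂ : 4*Q₂ = 2 + a₂*d₃ + a₃*d₂ - 2*(b₂*b₃ + c₂*c₃))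
    (hQ₃ : 4*Q₃ = 2 + a₃*d₁ + a₁*d₃ - 2*(b₃*b₁ + c₃*c₁))
    (U : ℝ)
    (hU : U = Q₁*(Q₁-2*Q₂) + Q₂*(Q₂-2*Q₃) + Q₃*(Q₃-2*Q₁) + 4*Q₁*Q₂*Q₃)
    (v₁ v₂ v₃ : ℝ)
    (hv₁ : v₁ = Q₁*(Q₁-Q₂-Q₃))
    (hv₂ : v₂ = Q₂*(Q₂-Q₃-Q₁))
    (hv₃ : v₃ = Q₃*(Q₃-Q₁-Q₂))
    (Δ₁ Δ₂ Δ₃ Δ₄ : ℝ)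
    (hΔ₁ : Δ₁ = -Matrix.det !![b₁,c₁,d₁; b₂,c₂,d₂; b₃,c₃,d₃])
    (hΔ₂ : Δ₂ = -(1/2) * Matrix.det !![a₁,c₁,d₁; a₂,c₂,d₂; a₃,c₃,d₃])
    (hΔ₃ : Δ₃ = (1/2) * Matrix.det !![a₁,b₁,d₁; a₂,b₂,d₂; a₃,b₃,d₃])
    (hΔ₄ : Δ₄ = Matrix.det !![a₁,b₁,c₁; a₂,b₂,c₂; a₃,b₃,c₃])
    (hU0 : U ≠ 0)
    (hQpos : 0 ≤ Q₁*Q₂*Q₃)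
    (ε : ℝ) (hε : ε = 1 ∨ ε = -1)
    (r : ℝ) (hr : r = Real.sqrt (Q₁*Q₂*Q₃))
    (a₀ b₀ c₀ d₀ : ℝ)
    (ha₀ : a₀ = (a₁*v₂ + a₂*v₃ + a₃*v₁ + ε*Δ₄*r)/U)
    (hb₀ : b₀ = (b₁*v₂ + b₂*v₃ + b₃*v₁ + ε*Δ₂*r)/U)
    (hc₀ : c₀ = (c₁*v₂ + c₂*v₃ + c₃*v₁ + ε*Δ₃*r)/U)
    (hd₀ : d₀ = (d₁*v₂ + d₂*v₃ + d₃*v₁ + ε*Δ₁*r)/U) :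
    b₀^2 + c₀^2 - a₀*d₀ = 1 ∧
    2*b₀*b₁ + 2*c₀*c₁ - a₀*d₁ - a₁*d₀ = 2 ∧
    2*b₀*b₂ + 2*c₀*c₂ - a₀*d₂ - a₂*d₀ = 2 ∧
    2*b₀*b₃ + 2*c₀*c₃ - a₀*d₃ - a₃*d₀ = 2 := by
  set K₁ : CircleQuad := ⟨a₁, b₁, c₁, d₁⟩
  set K₂ : CircleQuad := ⟨a₂, b₂, c₂, d₂⟩
  set K₃ : CircleQuad := ⟨a₃, b₃, c₃, d₃⟩
  have hs : (ε * r) ^ 2 = Q₁ * Q₂ * Q₃ := by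
    rcases hε with rfl | rfl <;> simp [hr, Real.sq_sqrt hQpos]
  have hcross : cross K₁ K₂ K₃ = ⟨Δ₄, Δ₂, Δ₃, Δ₁⟩ := by
    rw [hΔ₁, hΔ₂, hΔ₃, hΔ₄]; rfl
  have hK₀ : (⟨a₀, b₀, c₀, d₀⟩ : CircleQuad) =
      (tangentScale Q₁ Q₂ Q₃)⁻¹ • tangentCombination K₁ K₂ K₃ Q₁ Q₂ Q₃ (ε * r) := by
    rw [tangentCombination, hcross, tangentScale, ← hU, ← hv₁, ← hv₂, ← hv₃]
    ext <;> simp only [ha₀, hb₀, hc₀, hd₀, smul_a, smul_b, smul_c, smul_d, add_a, add_b, add_c,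
      add_d] <;> ring
  exact quad_eq_one_and_polar_eq_two_of_tangentCombination (K₁ := K₁) (K₂ := K₂) (K₃ := K₃)
    h₁ h₂ h₃ (by simp only [polar]; linarith) (by simp only [polar]; linarith)
    (by simp only [polar]; linarith) hs (by rwa [tangentScale, ← hU]) hK₀

theorem stmt_4
    (a₁ b₁ c₁ d₁ a₂ b₂ c₂ d₂ a₃ b₃ c₃ d₃ : ℝ)
    (h₁ : b₁^2 + c₁^2 - a₁*d₁ = 1)
    (h₂ : b₂^2 + c₂^2 - a₂*d₂ = 1)
    (h₃ : b₃^2 + c₃^2 - a₃*d₃ = 1)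
    (Q₁ Q₂ Q₃ : ℝ)
    (hQ₁ : 4*Q₁ = 2 + a₁*d₂ + a₂*d₁ - 2*(b₁*b₂ + c₁*c₂))
    (hQ₂ : 4*Q₂ = 2 + a₂*d₃ + a₃*d₂ - 2*(b₂*b₃ + c₂*c₃))
    (hQ₃ : 4*Q₃ = 2 + a₃*d₁ + a₁*d₃ - 2*(b₃*b₁ + c₃*c₁))
    (U : ℝ)
    (hU : U = Q₁*(Q₁-2*Q₂) + Q₂*(Q₂-2*Q₃) + Q₃*(Q₃-2*Q₁) + 4*Q₁*Q₂*Q₃)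
    (v₁ v₂ v₃ V : ℝ)
    (hv₁ : v₁ = Q₁*(Q₁-Q₂-Q₃))
    (hv₂ : v₂ = Q₂*(Q₂-Q₃-Q₁))
    (hv₃ : v₃ = Q₃*(Q₃-Q₁-Q₂))
    (hV : V = a₁*v₂ + a₂*v₃ + a₃*v₁)
    (Δ₁ Δ₂ Δ₃ Δ₄ : ℝ)
    (hΔ₁ : Δ₁ = -Matrix.det !![b₁,c₁,d₁; b₂,c₂,d₂; b₃,c₃,d₃])
    (hΔ₂ : Δ₂ = -(1/2) * Matrix.det !![a₁,c₁,d₁; a₂,c₂,d₂; a₃,c₃,d₃])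
    (hΔ₃ : Δ₃ = (1/2) * Matrix.det !![a₁,b₁,d₁; a₂,b₂,d₂; a₃,b₃,d₃])
    (hΔ₄ : Δ₄ = Matrix.det !![a₁,b₁,c₁; a₂,b₂,c₂; a₃,b₃,c₃])
    (hU0 : U ≠ 0)
    (hQpos : 0 ≤ Q₁*Q₂*Q₃)
    (ε : ℝ) (hε : ε = 1 ∨ ε = -1)
    (r : ℝ) (hr : r = Real.sqrt (Q₁*Q₂*Q₃))
    (a₀ b₀ c₀ d₀ : ℝ)
    (ha₀ : a₀ = (a₁*v₂ + a₂*v₃ + a₃*v₁ + ε*Δ₄*r)/U)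
    (hb₀ : b₀ = (b₁*v₂ + b₂*v₃ + b₃*v₁ + ε*Δ₂*r)/U)
    (hc₀ : c₀ = (c₁*v₂ + c₂*v₃ + c₃*v₁ + ε*Δ₃*r)/U)
    (hd₀ : d₀ = (d₁*v₂ + d₂*v₃ + d₃*v₁ + ε*Δ₁*r)/U) :
    b₀^2 + c₀^2 - a₀*d₀ = 1 ∧
    2*b₀*b₁ + 2*c₀*c₁ - a₀*d₁ - a₁*d₀ = 2 ∧
    2*b₀*b₂ + 2*c₀*c₂ - a₀*d₂ - a₂*d₀ = 2 ∧
    2*b₀*b₃ + 2*c₀*c₃ - a₀*d₃ - a₃*d₀ = 2 :=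
  stmt_4_general a₁ b₁ c₁ d₁ a₂ b₂ c₂ d₂ a₃ b₃ c₃ d₃ h₁ h₂ h₃ Q₁ Q₂ Q₃ hQ₁ hQ₂ hQ₃ U hU v₁ v₂ v₃ hv₁
    hv₂ hv₃ Δ₁ Δ₂ Δ₃ Δ₄ hΔ₁ hΔ₂ hΔ₃ hΔ₄ hU0 hQpos ε hε r hr a₀ b₀ c₀ d₀ ha₀ hb₀ hc₀ hd₀
end

section
/- Let K₁, K₂, K₃ be three normalized circle quadruples with a₁ = a₂ = a₃ = 0 (three oriented straight lines, so b_i² + c_i² = 1), and suppose Δ₁ ≠ 0 and Δ_bc ≠ 0. Define a₀ = 2Δ_bc/Δ₁, b₀ = −Δ_cd/Δ₁, c₀ = Δ_bd/Δ₁, d₀ = (b₀² + c₀² − 1)/a₀. Then the quadruple K₀ = (a₀,b₀,c₀,d₀) is normalized and for each i ∈ {1,2,3}: 2b₀b_i + 2c₀c_i − a₀d_i = 2 (i.e., Q(K₀,K_i) = 0, so K₀ is the oriented circle tangent to the three given lines). -/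
/-
The tangency conditions 2b₀bᵢ + 2c₀cᵢ − a₀dᵢ = 2 form a linear system in (2b₀, 2c₀, −a₀) whose
matrix has rows (bᵢ, cᵢ, dᵢ) and determinant −Δ₁; the given formulas are its solution by Cramer's
rule. Normalization of K₀ is then just the definition of d₀, which makes sense because a₀ ≠ 0.
-/

open Matrix

section CommRing

variable {R : Type*} [CommRing R]

theorem cramer_fin_three_one (b₁ c₁ d₁ b₂ c₂ d₂ b₃ c₃ d₃ : R) :
    cramer !![b₁, c₁, d₁; b₂, c₂, d₂; b₃, c₃, d₃] 1 =
      ![det !![c₁, d₁, 1; c₂, d₂, 1; c₃, d₃, 1], -det !![b₁, d₁, 1; b₂, d₂, 1; b₃, d₃, 1],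
        det !![b₁, c₁, 1; b₂, c₂, 1; b₃, c₃, 1]] := by
  ext i
  fin_cases i <;> simp [cramer_apply, det_fin_three] <;> ring

theorem row_mul_cofactors_eq_det (b₁ c₁ d₁ b₂ c₂ d₂ b₃ c₃ d₃ : R) (i : Fin 3) :
    ![b₁, b₂, b₃] i * det !![c₁, d₁, 1; c₂, d₂, 1; c₃, d₃, 1]
      - ![c₁, c₂, c₃] i * det !![b₁, d₁, 1; b₂, d₂, 1; b₃, d₃, 1]
      + ![d₁, d₂, d₃] i * det !![b₁, c₁, 1; b₂, c₂, 1; b₃, c₃, 1] =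
      det !![b₁, c₁, d₁; b₂, c₂, d₂; b₃, c₃, d₃] := by
  have h := congrFun (mulVec_cramer !![b₁, c₁, d₁; b₂, c₂, d₂; b₃, c₃, d₃] 1) i
  rw [cramer_fin_three_one] at h
  fin_cases i <;> simpa [mulVec, dotProduct, Fin.sum_univ_three, sub_eq_add_neg] using h

end CommRing

theorem tangent_of_row_mul_cofactors {K : Type*} [Field K] {Δ₁ Δbc Δbd Δcd b c d : K}
    (hΔ₁0 : Δ₁ ≠ 0) (h : b * Δcd - c * Δbd + d * Δbc = -Δ₁) :
    2 * (-Δcd / Δ₁) * b + 2 * (Δbd / Δ₁) * c - 2 * Δbc / Δ₁ * d = 2 := by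
  field_simp
  linear_combination -2 * h

theorem stmt_6_general
    (b₁ c₁ d₁ b₂ c₂ d₂ b₃ c₃ d₃ : ℝ)
    (Δ₁ Δbc Δbd Δcd : ℝ)
    (hΔ₁ : Δ₁ = -Matrix.det !![b₁,c₁,d₁; b₂,c₂,d₂; b₃,c₃,d₃])
    (hΔbc : Δbc = Matrix.det !![b₁,c₁,1; b₂,c₂,1; b₃,c₃,1])
    (hΔbd : Δbd = Matrix.det !![b₁,d₁,1; b₂,d₂,1; b₃,d₃,1])
    (hΔcd : Δcd = Matrix.det !![c₁,d₁,1; c₂,d₂,1; c₃,d₃,1])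
    (hΔ₁0 : Δ₁ ≠ 0) (hΔbc0 : Δbc ≠ 0)
    (a₀ b₀ c₀ d₀ : ℝ)
    (ha₀ : a₀ = 2*Δbc/Δ₁)
    (hb₀ : b₀ = -Δcd/Δ₁)
    (hc₀ : c₀ = Δbd/Δ₁)
    (hd₀ : d₀ = (b₀^2 + c₀^2 - 1)/a₀) :
    b₀^2 + c₀^2 - a₀*d₀ = 1 ∧
    2*b₀*b₁ + 2*c₀*c₁ - a₀*d₁ = 2 ∧
    2*b₀*b₂ + 2*c₀*c₂ - a₀*d₂ = 2 ∧
    2*b₀*b₃ + 2*c₀*c₃ - a₀*d₃ = 2 := by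
  have hrow (i : Fin 3) := row_mul_cofactors_eq_det b₁ c₁ d₁ b₂ c₂ d₂ b₃ c₃ d₃ i
  rw [← hΔcd, ← hΔbd, ← hΔbc, ← neg_eq_iff_eq_neg.mpr hΔ₁] at hrow
  have ha₀0 : a₀ ≠ 0 := ha₀ ▸ div_ne_zero (mul_ne_zero two_ne_zero hΔbc0) hΔ₁0
  subst ha₀ hb₀ hc₀
  refine ⟨?_, tangent_of_row_mul_cofactors hΔ₁0 (hrow 0),
    tangent_of_row_mul_cofactors hΔ₁0 (hrow 1), tangent_of_row_mul_cofactors hΔ₁0 (hrow 2)⟩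
  rw [hd₀, mul_div_cancel₀ _ ha₀0]
  ring

theorem stmt_6
    (a₁ b₁ c₁ d₁ a₂ b₂ c₂ d₂ a₃ b₃ c₃ d₃ : ℝ)
    (h₁ : b₁^2 + c₁^2 - a₁*d₁ = 1)
    (h₂ : b₂^2 + c₂^2 - a₂*d₂ = 1)
    (h₃ : b₃^2 + c₃^2 - a₃*d₃ = 1)
    (ha₁ : a₁ = 0) (ha₂ : a₂ = 0) (ha₃ : a₃ = 0)
    (Δ₁ Δbc Δbd Δcd : ℝ)
    (hΔ₁ : Δ₁ = -Matrix.det !![b₁,c₁,d₁; b₂,c₂,d₂; b₃,c₃,d₃])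
    (hΔbc : Δbc = Matrix.det !![b₁,c₁,1; b₂,c₂,1; b₃,c₃,1])
    (hΔbd : Δbd = Matrix.det !![b₁,d₁,1; b₂,d₂,1; b₃,d₃,1])
    (hΔcd : Δcd = Matrix.det !![c₁,d₁,1; c₂,d₂,1; c₃,d₃,1])
    (hΔ₁0 : Δ₁ ≠ 0) (hΔbc0 : Δbc ≠ 0)
    (a₀ b₀ c₀ d₀ : ℝ)
    (ha₀ : a₀ = 2*Δbc/Δ₁)
    (hb₀ : b₀ = -Δcd/Δ₁)
    (hc₀ : c₀ = Δbd/Δ₁)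
    (hd₀ : d₀ = (b₀^2 + c₀^2 - 1)/a₀) :
    b₀^2 + c₀^2 - a₀*d₀ = 1 ∧
    2*b₀*b₁ + 2*c₀*c₁ - a₀*d₁ = 2 ∧
    2*b₀*b₂ + 2*c₀*c₂ - a₀*d₂ = 2 ∧
    2*b₀*b₃ + 2*c₀*c₃ - a₀*d₃ = 2 :=
  stmt_6_general b₁ c₁ d₁ b₂ c₂ d₂ b₃ c₃ d₃ Δ₁ Δbc Δbd Δcd hΔ₁ hΔbc hΔbd hΔcd hΔ₁0 hΔbc0 a₀ b₀ c₀ d₀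
    ha₀ hb₀ hc₀ hd₀
end

section
/- Let K₁, K₂, K₃ be three normalized circle quadruples with Q₁ = Q₂ = Q₃ = 1 (pairwise counter-tangent oriented circles). Then U = 1, V = −(a₁+a₂+a₃), W = (a₁+a₂+a₃)² − 4(a₁a₂+a₂a₃+a₃a₁), and Δ₄² = 4(a₁a₂+a₂a₃+a₃a₁); in particular a₁a₂+a₂a₃+a₃a₁ ≥ 0, and the two roots of the equation U·x² − 2V·x + W = 0 are x = −(a₁+a₂+a₃) ± 2√(a₁a₂+a₂a₃+a₃a₁) (the oriented Descartes circle formula). -/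
/-!
Equip ℝ⁴ with the quadratic form `b² + c² - a d`, so that a normalized quadruple is a unit vector and
`4 Q(K₁, K₂) = 2 - 2 ⟨K₁, K₂⟩`; pairwise counter-tangency means `⟨Kᵢ, Kⱼ⟩ = -1`. The null vector
`∞ = (0, 0, 0, 1)` pairs with `K` to `-a / 2`. The Gram matrix of `K₁, K₂, K₃, ∞` is therefore explicit,
with determinant `-(a₁a₂ + a₂a₃ + a₃a₁)`; on the other hand it equals `Δ₄² · det(form) = -Δ₄² / 4`.
With `Q₁ = Q₂ = Q₃ = 1` the formulas for `U`, `V`, `W` are polynomial identities, and the quadratic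
becomes `(x + a₁ + a₂ + a₃)² = Δ₄²`.
-/

open Matrix

theorem Matrix.det_mul_mul_transpose {n R : Type*} [Fintype n] [DecidableEq n] [CommRing R]
    (M J : Matrix n n R) : (M * J * Mᵀ).det = M.det ^ 2 * J.det := by
  rw [det_mul, det_mul, det_transpose]
  ring

/-- The Gram matrix of the form `b² + c² - a d` in the coordinates `(a, b, c, d)`. -/
noncomputable def circleForm : Matrix (Fin 4) (Fin 4) ℝ :=
  !![0, 0, 0, -1/2; 0, 1, 0, 0; 0, 0, 1, 0; -1/2, 0, 0, 0]

theorem det_circleForm : circleForm.det = -1/4 := by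
  simp [circleForm, det_succ_row_zero, Fin.sum_univ_succ, Fin.succAbove]
  norm_num

theorem det_fin_four_of_last_row_eq_single {R : Type*} [CommRing R]
    (a₁ b₁ c₁ d₁ a₂ b₂ c₂ d₂ a₃ b₃ c₃ d₃ : R) :
    det !![a₁, b₁, c₁, d₁; a₂, b₂, c₂, d₂; a₃, b₃, c₃, d₃; 0, 0, 0, 1]
      = det !![a₁, b₁, c₁; a₂, b₂, c₂; a₃, b₃, c₃] := by
  simp [det_succ_column _ 3, Fin.sum_univ_succ, Fin.succAbove]
  ring

/-- The Gram matrix of three pairwise counter-tangent unit circles and the point at infinity. -/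
noncomputable def counterTangentGram (a₁ a₂ a₃ : ℝ) : Matrix (Fin 4) (Fin 4) ℝ :=
  !![1, -1, -1, -a₁/2; -1, 1, -1, -a₂/2; -1, -1, 1, -a₃/2; -a₁/2, -a₂/2, -a₃/2, 0]

theorem det_counterTangentGram (a₁ a₂ a₃ : ℝ) :
    (counterTangentGram a₁ a₂ a₃).det = -(a₁*a₂ + a₂*a₃ + a₃*a₁) := by
  simp [counterTangentGram, det_succ_row_zero, Fin.sum_univ_succ, Fin.succAbove]
  ring

theorem sq_det_eq_of_counterTangent {a₁ b₁ c₁ d₁ a₂ b₂ c₂ d₂ a₃ b₃ c₃ d₃ : ℝ}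
    (h₁ : b₁^2 + c₁^2 - a₁*d₁ = 1) (h₂ : b₂^2 + c₂^2 - a₂*d₂ = 1) (h₃ : b₃^2 + c₃^2 - a₃*d₃ = 1)
    (h₁₂ : a₁*d₂ + a₂*d₁ - 2*(b₁*b₂ + c₁*c₂) = 2)
    (h₂₃ : a₂*d₃ + a₃*d₂ - 2*(b₂*b₃ + c₂*c₃) = 2)
    (h₃₁ : a₃*d₁ + a₁*d₃ - 2*(b₃*b₁ + c₃*c₁) = 2) :
    (det !![a₁, b₁, c₁; a₂, b₂, c₂; a₃, b₃, c₃]) ^ 2 = 4*(a₁*a₂ + a₂*a₃ + a₃*a₁) := by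
  set M : Matrix (Fin 4) (Fin 4) ℝ := !![a₁, b₁, c₁, d₁; a₂, b₂, c₂, d₂; a₃, b₃, c₃, d₃; 0, 0, 0, 1]
  have hgram : M * circleForm * Mᵀ = counterTangentGram a₁ a₂ a₃ := by
    ext i j
    fin_cases i <;> fin_cases j <;>
      simp [M, circleForm, counterTangentGram, mul_apply, Fin.sum_univ_four] <;> linarith
  have hdet := congrArg det hgram
  rw [det_mul_mul_transpose, det_circleForm, det_counterTangentGram,
    det_fin_four_of_last_row_eq_single] at hdet
  linarith

theorem add_sq_eq_four_mul_iff {p q x : ℝ} (hq : 0 ≤ q) :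
    (x + p)^2 = 4*q ↔ x = -p + 2*√q ∨ x = -p - 2*√q := by
  have h4q : 4*q = (2*√q)^2 := by rw [mul_pow, Real.sq_sqrt hq]; norm_num
  rw [h4q, sq_eq_sq_iff_eq_or_eq_neg]
  constructor <;> rintro (h | h) <;> [left; right; left; right] <;> linarith

theorem stmt_8
    (a₁ b₁ c₁ d₁ a₂ b₂ c₂ d₂ a₃ b₃ c₃ d₃ : ℝ)
    (h₁ : b₁^2 + c₁^2 - a₁*d₁ = 1)
    (h₂ : b₂^2 + c₂^2 - a₂*d₂ = 1)
    (h₃ : b₃^2 + c₃^2 - a₃*d₃ = 1)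
    (Q₁ Q₂ Q₃ : ℝ)
    (hQ₁ : 4*Q₁ = 2 + a₁*d₂ + a₂*d₁ - 2*(b₁*b₂ + c₁*c₂))
    (hQ₂ : 4*Q₂ = 2 + a₂*d₃ + a₃*d₂ - 2*(b₂*b₃ + c₂*c₃))
    (hQ₃ : 4*Q₃ = 2 + a₃*d₁ + a₁*d₃ - 2*(b₃*b₁ + c₃*c₁))
    (hq₁ : Q₁ = 1) (hq₂ : Q₂ = 1) (hq₃ : Q₃ = 1)
    (U : ℝ)
    (hU : U = Q₁*(Q₁-2*Q₂) + Q₂*(Q₂-2*Q₃) + Q₃*(Q₃-2*Q₁) + 4*Q₁*Q₂*Q₃)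
    (v₁ v₂ v₃ V : ℝ)
    (hv₁ : v₁ = Q₁*(Q₁-Q₂-Q₃))
    (hv₂ : v₂ = Q₂*(Q₂-Q₃-Q₁))
    (hv₃ : v₃ = Q₃*(Q₃-Q₁-Q₂))
    (hV : V = a₁*v₂ + a₂*v₃ + a₃*v₁)
    (W : ℝ)
    (hW : W = a₁*Q₂*(a₁*Q₂-2*a₂*Q₃) + a₂*Q₃*(a₂*Q₃-2*a₃*Q₁) + a₃*Q₁*(a₃*Q₁-2*a₁*Q₂))
    (Δ₄ : ℝ)
    (hΔ₄ : Δ₄ = Matrix.det !![a₁,b₁,c₁; a₂,b₂,c₂; a₃,b₃,c₃]) :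
    U = 1 ∧
    V = -(a₁+a₂+a₃) ∧
    W = (a₁+a₂+a₃)^2 - 4*(a₁*a₂+a₂*a₃+a₃*a₁) ∧
    Δ₄^2 = 4*(a₁*a₂+a₂*a₃+a₃*a₁) ∧
    0 ≤ a₁*a₂+a₂*a₃+a₃*a₁ ∧
    (∀ x : ℝ, U*x^2 - 2*V*x + W = 0 ↔
      (x = -(a₁+a₂+a₃) + 2*Real.sqrt (a₁*a₂+a₂*a₃+a₃*a₁) ∨
       x = -(a₁+a₂+a₃) - 2*Real.sqrt (a₁*a₂+a₂*a₃+a₃*a₁))) := by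
  subst hq₁ hq₂ hq₃ hU hV hv₁ hv₂ hv₃ hW
  have hΔ : Δ₄^2 = 4*(a₁*a₂ + a₂*a₃ + a₃*a₁) :=
    hΔ₄ ▸ sq_det_eq_of_counterTangent h₁ h₂ h₃ (by linarith) (by linarith) (by linarith)
  have hσ : 0 ≤ a₁*a₂ + a₂*a₃ + a₃*a₁ := by linarith [sq_nonneg Δ₄]
  refine ⟨by ring, by ring, by ring, hΔ, hσ, fun x => ?_⟩
  rw [← add_sq_eq_four_mul_iff hσ]
  constructor <;> intro h <;> linear_combination h
end

section
/- Let k₁, k₂, k₃ be nonzero reals and ℓ₁, ℓ₂, ℓ₃ ≥ 0 reals. Set Q₁ = ((k₁k₂ℓ₁)² − (k₂−k₁)²)/(4k₁k₂), Q₂ = ((k₂k₃ℓ₂)² − (k₃−k₂)²)/(4k₂k₃), Q₃ = ((k₃k₁ℓ₃)² − (k₁−k₃)²)/(4k₃k₁). Then P⊥ = k₁²k₂²k₃²·(1/16)·(ℓ₁+ℓ₂+ℓ₃)(ℓ₂+ℓ₃−ℓ₁)(ℓ₃+ℓ₁−ℓ₂)(ℓ₁+ℓ₂−ℓ₃); in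 particular P⊥ equals k₁²k₂²k₃² times the squared area (by Heron's formula) of a triangle with side lengths ℓ₁, ℓ₂, ℓ₃ whenever such a triangle exists. -/
theorem stmt_9_general
    (k₁ k₂ k₃ ℓ₁ ℓ₂ ℓ₃ : ℝ)
    (hk₁ : k₁ ≠ 0) (hk₂ : k₂ ≠ 0) (hk₃ : k₃ ≠ 0)
    (Q₁ Q₂ Q₃ : ℝ)
    (hQ₁ : Q₁ = ((k₁*k₂*ℓ₁)^2 - (k₂-k₁)^2)/(4*k₁*k₂))
    (hQ₂ : Q₂ = ((k₂*k₃*ℓ₂)^2 - (k₃-k₂)^2)/(4*k₂*k₃))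
    (hQ₃ : Q₃ = ((k₃*k₁*ℓ₃)^2 - (k₁-k₃)^2)/(4*k₃*k₁))
    (P : ℝ)
    (hP : P = k₁^2*(1-Q₂)*Q₂ + k₂^2*(1-Q₃)*Q₃ + k₃^2*(1-Q₁)*Q₁
        + k₁*k₂*(Q₁-Q₃-Q₂+2*Q₃*Q₂) + k₂*k₃*(Q₂-Q₁-Q₃+2*Q₁*Q₃)
        + k₃*k₁*(Q₃-Q₂-Q₁+2*Q₂*Q₁)) :
    P = k₁^2*k₂^2*k₃^2*((1/16)*(ℓ₁+ℓ₂+ℓ₃)*(ℓ₂+ℓ₃-ℓ₁)*(ℓ₃+ℓ₁-ℓ₂)*(ℓ₁+ℓ₂-ℓ₃)) := by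
  subst hQ₁ hQ₂ hQ₃ hP
  field_simp
  ring

theorem stmt_9
    (k₁ k₂ k₃ ℓ₁ ℓ₂ ℓ₃ : ℝ)
    (hk₁ : k₁ ≠ 0) (hk₂ : k₂ ≠ 0) (hk₃ : k₃ ≠ 0)
    (hℓ₁ : 0 ≤ ℓ₁) (hℓ₂ : 0 ≤ ℓ₂) (hℓ₃ : 0 ≤ ℓ₃)
    (Q₁ Q₂ Q₃ : ℝ)
    (hQ₁ : Q₁ = ((k₁*k₂*ℓ₁)^2 - (k₂-k₁)^2)/(4*k₁*k₂))
    (hQ₂ : Q₂ = ((k₂*k₃*ℓ₂)^2 - (k₃-k₂)^2)/(4*k₂*k₃))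
    (hQ₃ : Q₃ = ((k₃*k₁*ℓ₃)^2 - (k₁-k₃)^2)/(4*k₃*k₁))
    (P : ℝ)
    (hP : P = k₁^2*(1-Q₂)*Q₂ + k₂^2*(1-Q₃)*Q₃ + k₃^2*(1-Q₁)*Q₁
        + k₁*k₂*(Q₁-Q₃-Q₂+2*Q₃*Q₂) + k₂*k₃*(Q₂-Q₁-Q₃+2*Q₁*Q₃)
        + k₃*k₁*(Q₃-Q₂-Q₁+2*Q₂*Q₁)) :
    P = k₁^2*k₂^2*k₃^2*((1/16)*(ℓ₁+ℓ₂+ℓ₃)*(ℓ₂+ℓ₃-ℓ₁)*(ℓ₃+ℓ₁-ℓ₂)*(ℓ₁+ℓ₂-ℓ₃)) :=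
  stmt_9_general k₁ k₂ k₃ ℓ₁ ℓ₂ ℓ₃ hk₁ hk₂ hk₃ Q₁ Q₂ Q₃ hQ₁ hQ₂ hQ₃ P hP
end

section
/- For any three normalized circle quadruples K₁, K₂, K₃, one has 4·P⊥ = Δ₄², where P⊥ = a₁²(1−Q₂)Q₂ + a₂²(1−Q₃)Q₃ + a₃²(1−Q₁)Q₁ + a₁a₂(Q₁−Q₃−Q₂+2Q₃Q₂) + a₂a₃(Q₂−Q₁−Q₃+2Q₁Q₃) + a₃a₁(Q₃−Q₂−Q₁+2Q₂Q₁). In particular P⊥ ≥ 0. -/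
/-!
Let `⟨K, L⟩ = b b' + c c' - (a d' + a' d) / 2` be the Lorentzian form on `ℝ⁴` whose quadratic form
is `b² + c² - a d`, so that normalized quadruples are unit vectors and `Q(Kᵢ, Kⱼ) = (1 - ⟨Kᵢ, Kⱼ⟩) / 2`.
In terms of the Gram matrix `G = (⟨Kᵢ, Kⱼ⟩)` and `a = (a₁, a₂, a₃)`, one gets `4 P⊥ = aᵀ adj(G) a`.
Now `v = (0, 0, 0, -2)` satisfies `⟨Kᵢ, v⟩ = aᵢ` and `⟨v, v⟩ = 0`, so the Gram matrix of
`K₁, K₂, K₃, v` is `G` bordered by `a`. Its determinant is `-aᵀ adj(G) a` on the one hand, and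
`det(K₁, K₂, K₃, v)² · det⟨·,·⟩ = (2 Δ₄)² · (-1/4) = -Δ₄²` on the other. Hence `4 P⊥ = Δ₄² ≥ 0`.
-/

open Matrix

/-- Coordinates `(a, b, c, d)` of a circle quadruple are `(K 0, K 1, K 2, K 3)`. -/
noncomputable def lorentzForm (K L : Fin 4 → ℝ) : ℝ :=
  K 1 * L 1 + K 2 * L 2 - (K 0 * L 3 + L 0 * K 3) / 2

noncomputable def lorentzGram (K : Fin 3 → Fin 4 → ℝ) : Matrix (Fin 3) (Fin 3) ℝ :=
  Matrix.of fun i j => lorentzForm (K i) (K j)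

theorem lorentzGram_adjugate_form_eq_det_sq (K : Fin 3 → Fin 4 → ℝ) :
    (fun i => K i 0) ⬝ᵥ (lorentzGram K).adjugate *ᵥ (fun i => K i 0)
      = (Matrix.of fun i j : Fin 3 => K i j.castSucc).det ^ 2 := by
  simp only [dotProduct, mulVec, lorentzGram, lorentzForm, adjugate_fin_three, of_apply,
    cons_val', cons_val_fin_one, Fin.sum_univ_three, cons_val_zero, cons_val_one, cons_val,
    det_fin_three, Fin.castSucc_zero, Fin.castSucc_one, Fin.reduceCastSucc]
  ring

def perpPolynomial (a₁ a₂ a₃ Q₁ Q₂ Q₃ : ℝ) : ℝ :=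
  a₁^2*(1-Q₂)*Q₂ + a₂^2*(1-Q₃)*Q₃ + a₃^2*(1-Q₁)*Q₁
    + a₁*a₂*(Q₁-Q₃-Q₂+2*Q₃*Q₂) + a₂*a₃*(Q₂-Q₁-Q₃+2*Q₁*Q₃)
    + a₃*a₁*(Q₃-Q₂-Q₁+2*Q₂*Q₁)

theorem four_mul_perpPolynomial (a₁ a₂ a₃ Q₁ Q₂ Q₃ : ℝ) :
    4 * perpPolynomial a₁ a₂ a₃ Q₁ Q₂ Q₃
      = ![a₁, a₂, a₃] ⬝ᵥ
          (!![1, 1 - 2*Q₁, 1 - 2*Q₃; 1 - 2*Q₁, 1, 1 - 2*Q₂; 1 - 2*Q₃, 1 - 2*Q₂, 1]).adjugate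
            *ᵥ ![a₁, a₂, a₃] := by
  simp only [perpPolynomial, dotProduct, mulVec, adjugate_fin_three, of_apply, cons_val',
    cons_val_one, cons_val_zero, cons_val_fin_one, cons_val, Fin.sum_univ_three]
  ring

theorem stmt_10
    (a₁ b₁ c₁ d₁ a₂ b₂ c₂ d₂ a₃ b₃ c₃ d₃ : ℝ)
    (h₁ : b₁^2 + c₁^2 - a₁*d₁ = 1)
    (h₂ : b₂^2 + c₂^2 - a₂*d₂ = 1)
    (h₃ : b₃^2 + c₃^2 - a₃*d₃ = 1)
    (Q₁ Q₂ Q₃ : ℝ)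
    (hQ₁ : 4*Q₁ = 2 + a₁*d₂ + a₂*d₁ - 2*(b₁*b₂ + c₁*c₂))
    (hQ₂ : 4*Q₂ = 2 + a₂*d₃ + a₃*d₂ - 2*(b₂*b₃ + c₂*c₃))
    (hQ₃ : 4*Q₃ = 2 + a₃*d₁ + a₁*d₃ - 2*(b₃*b₁ + c₃*c₁))
    (Δ₄ : ℝ)
    (hΔ₄ : Δ₄ = Matrix.det !![a₁,b₁,c₁; a₂,b₂,c₂; a₃,b₃,c₃])
    (P : ℝ)
    (hP : P = a₁^2*(1-Q₂)*Q₂ + a₂^2*(1-Q₃)*Q₃ + a₃^2*(1-Q₁)*Q₁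
        + a₁*a₂*(Q₁-Q₃-Q₂+2*Q₃*Q₂) + a₂*a₃*(Q₂-Q₁-Q₃+2*Q₁*Q₃)
        + a₃*a₁*(Q₃-Q₂-Q₁+2*Q₂*Q₁)) :
    4*P = Δ₄^2 ∧ 0 ≤ P := by
  set K : Fin 3 → Fin 4 → ℝ := ![![a₁, b₁, c₁, d₁], ![a₂, b₂, c₂, d₂], ![a₃, b₃, c₃, d₃]]
  have hGram : lorentzGram K
      = !![1, 1 - 2*Q₁, 1 - 2*Q₃; 1 - 2*Q₁, 1, 1 - 2*Q₂; 1 - 2*Q₃, 1 - 2*Q₂, 1] := by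
    ext i j
    fin_cases i <;> fin_cases j <;>
      simp only [K, lorentzGram, lorentzForm, of_apply, cons_val', cons_val_zero, cons_val_one,
        cons_val_fin_one, cons_val, Fin.zero_eta, Fin.mk_one, Fin.reduceFinMk, Fin.isValue,
        add_self_div_two] <;>
      linarith
  have hΔ : Δ₄ = (Matrix.of fun i j : Fin 3 => K i j.castSucc).det := by
    rw [hΔ₄]
    congr
    ext i j
    fin_cases i <;> fin_cases j <;> rfl
  have h4P : 4 * P = Δ₄ ^ 2 := by
    rw [hP, ← perpPolynomial, four_mul_perpPolynomial, ← hGram, hΔ,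
      ← lorentzGram_adjugate_form_eq_det_sq]
    rfl
  exact ⟨h4P, by linarith [sq_nonneg Δ₄]⟩
end

section
/- For any three normalized circle quadruples K₁, K₂, K₃, one has 4G = Δ_ab² + Δ_ac², where G = Q₁(a₁−a₃)(a₂−a₃) + Q₂(a₂−a₁)(a₃−a₁) + Q₃(a₃−a₂)(a₁−a₂). In particular G ≥ 0. -/
/-!
Under the normalization `b² + c² - a d = 1`, the invariant `4 Q(Kᵢ, Kⱼ)` is the quadratic form
`b² + c² - a d` evaluated at the difference `Kᵢ - Kⱼ`. Weighting these differences as in `G` and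
polarizing the classical identity for the squared area of a triangle, the `(b, b)` and `(c, c)`
parts give `Δ_ab²` and `Δ_ac²`, while the mixed `(a, d)` part is a multiple of the determinant
with two equal columns `a`, hence vanishes.
-/

variable {R : Type*} [CommRing R]

theorem det_mul_det_eq_cyclic_sum (x₁ x₂ x₃ y₁ y₂ y₃ z₁ z₂ z₃ : R) :
    !![x₁, y₁, 1; x₂, y₂, 1; x₃, y₃, 1].det * !![x₁, z₁, 1; x₂, z₂, 1; x₃, z₃, 1].det =
      (y₁ - y₂) * (z₁ - z₂) * (x₁ - x₃) * (x₂ - x₃) +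
        (y₂ - y₃) * (z₂ - z₃) * (x₂ - x₁) * (x₃ - x₁) +
        (y₃ - y₁) * (z₃ - z₁) * (x₃ - x₂) * (x₁ - x₂) := by
  simp only [Matrix.det_fin_three, Matrix.of_apply, Matrix.cons_val', Matrix.cons_val_zero,
    Matrix.cons_val_one, Matrix.cons_val_two, Matrix.empty_val', Matrix.cons_val_fin_one,
    Matrix.head_cons, Matrix.tail_cons, Matrix.head_fin_const]
  ring

theorem cyclic_sum_self_eq_zero (x₁ x₂ x₃ z₁ z₂ z₃ : R) :
    (x₁ - x₂) * (z₁ - z₂) * (x₁ - x₃) * (x₂ - x₃) +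
        (x₂ - x₃) * (z₂ - z₃) * (x₂ - x₁) * (x₃ - x₁) +
        (x₃ - x₁) * (z₃ - z₁) * (x₃ - x₂) * (x₁ - x₂) = 0 := by
  rw [← det_mul_det_eq_cyclic_sum, Matrix.det_zero_of_column_eq (i := 0) (j := 1) (by decide)
    (fun k => by fin_cases k <;> rfl), zero_mul]

theorem four_mul_inversive_eq_sub_form {a₁ b₁ c₁ d₁ a₂ b₂ c₂ d₂ Q : R}
    (h₁ : b₁ ^ 2 + c₁ ^ 2 - a₁ * d₁ = 1) (h₂ : b₂ ^ 2 + c₂ ^ 2 - a₂ * d₂ = 1)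
    (hQ : 4 * Q = 2 + a₁ * d₂ + a₂ * d₁ - 2 * (b₁ * b₂ + c₁ * c₂)) :
    4 * Q = (b₁ - b₂) ^ 2 + (c₁ - c₂) ^ 2 - (a₁ - a₂) * (d₁ - d₂) := by
  linear_combination hQ - h₁ - h₂

theorem stmt_15
    (a₁ b₁ c₁ d₁ a₂ b₂ c₂ d₂ a₃ b₃ c₃ d₃ : ℝ)
    (h₁ : b₁^2 + c₁^2 - a₁*d₁ = 1)
    (h₂ : b₂^2 + c₂^2 - a₂*d₂ = 1)
    (h₃ : b₃^2 + c₃^2 - a₃*d₃ = 1)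
    (Q₁ Q₂ Q₃ : ℝ)
    (hQ₁ : 4*Q₁ = 2 + a₁*d₂ + a₂*d₁ - 2*(b₁*b₂ + c₁*c₂))
    (hQ₂ : 4*Q₂ = 2 + a₂*d₃ + a₃*d₂ - 2*(b₂*b₃ + c₂*c₃))
    (hQ₃ : 4*Q₃ = 2 + a₃*d₁ + a₁*d₃ - 2*(b₃*b₁ + c₃*c₁))
    (Δab Δac : ℝ)
    (hΔab : Δab = Matrix.det !![a₁,b₁,1; a₂,b₂,1; a₃,b₃,1])
    (hΔac : Δac = Matrix.det !![a₁,c₁,1; a₂,c₂,1; a₃,c₃,1])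
    (G : ℝ)
    (hG : G = Q₁*(a₁-a₃)*(a₂-a₃) + Q₂*(a₂-a₁)*(a₃-a₁) + Q₃*(a₃-a₂)*(a₁-a₂)) :
    4*G = Δab^2 + Δac^2 ∧ 0 ≤ G := by
  have e₁ := four_mul_inversive_eq_sub_form h₁ h₂ hQ₁
  have e₂ := four_mul_inversive_eq_sub_form h₂ h₃ hQ₂
  have e₃ := four_mul_inversive_eq_sub_form h₃ h₁ hQ₃
  have hb := det_mul_det_eq_cyclic_sum a₁ a₂ a₃ b₁ b₂ b₃ b₁ b₂ b₃
  have hc := det_mul_det_eq_cyclic_sum a₁ a₂ a₃ c₁ c₂ c₃ c₁ c₂ c₃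
  have hd := cyclic_sum_self_eq_zero a₁ a₂ a₃ d₁ d₂ d₃
  have key : 4 * G = Δab ^ 2 + Δac ^ 2 := by
    subst hG hΔab hΔac
    linear_combination (a₁ - a₃) * (a₂ - a₃) * e₁ + (a₂ - a₁) * (a₃ - a₁) * e₂ +
      (a₃ - a₂) * (a₁ - a₂) * e₃ - hb - hc + hd
  exact ⟨key, by linarith [sq_nonneg Δab, sq_nonneg Δac]⟩
end

section
/- Let K₁, K₂, K₃ be three normalized circle quadruples with a₁ = a₂ = a₃ = 0 (three oriented straight lines, so b_i² + c_i² = 1). Then U = 0. -/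
/-!
For oriented lines (a = 0) the invariant is Q(Kᵢ, Kⱼ) = (1 - pᵢⱼ)/2, where pᵢⱼ is the inner
product of the unit normals (bᵢ, cᵢ) and (bⱼ, cⱼ). In these terms U is -1/4 times the Gram
determinant of the three normals, and three vectors in the plane have vanishing Gram determinant
because the Gram matrix Aᵀ A factors through ℝ².
-/

open Matrix

theorem Matrix.det_mul_eq_zero_of_card_lt {m n K : Type*} [Fintype m] [Fintype n] [DecidableEq n]
    [Field K] (B : Matrix n m K) (A : Matrix m n K) (h : Fintype.card m < Fintype.card n) :
    (B * A).det = 0 := by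
  by_contra hdet
  have hrank := (rank_of_det_ne_zero hdet).symm.le.trans
    ((rank_mul_le_right B A).trans (rank_le_card_height A))
  omega

theorem gram_det_unit_vectors_plane_eq_zero {b₁ c₁ b₂ c₂ b₃ c₃ : ℝ}
    (h₁ : b₁ ^ 2 + c₁ ^ 2 = 1) (h₂ : b₂ ^ 2 + c₂ ^ 2 = 1) (h₃ : b₃ ^ 2 + c₃ ^ 2 = 1) :
    1 + 2 * (b₁ * b₂ + c₁ * c₂) * (b₂ * b₃ + c₂ * c₃) * (b₃ * b₁ + c₃ * c₁)
      - (b₁ * b₂ + c₁ * c₂) ^ 2 - (b₂ * b₃ + c₂ * c₃) ^ 2 - (b₃ * b₁ + c₃ * c₁) ^ 2 = 0 := by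
  let A : Matrix (Fin 2) (Fin 3) ℝ := !![b₁, b₂, b₃; c₁, c₂, c₃]
  have hgram : (Aᵀ * A).det = 0 := det_mul_eq_zero_of_card_lt Aᵀ A (by simp)
  rw [det_fin_three] at hgram
  simp only [A, mul_apply, Fin.sum_univ_two, transpose_apply, of_apply, cons_val, ← sq,
    h₁, h₂, h₃] at hgram
  linear_combination hgram

theorem triple_invariant_eq_neg_gram_det_div_four {Q₁ Q₂ Q₃ p₁ p₂ p₃ : ℝ}
    (hQ₁ : 4 * Q₁ = 2 - 2 * p₁) (hQ₂ : 4 * Q₂ = 2 - 2 * p₂) (hQ₃ : 4 * Q₃ = 2 - 2 * p₃) :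
    Q₁ * (Q₁ - 2 * Q₂) + Q₂ * (Q₂ - 2 * Q₃) + Q₃ * (Q₃ - 2 * Q₁) + 4 * Q₁ * Q₂ * Q₃ =
      -(1 + 2 * p₁ * p₂ * p₃ - p₁ ^ 2 - p₂ ^ 2 - p₃ ^ 2) / 4 := by
  obtain rfl : Q₁ = (1 - p₁) / 2 := by linarith
  obtain rfl : Q₂ = (1 - p₂) / 2 := by linarith
  obtain rfl : Q₃ = (1 - p₃) / 2 := by linarith
  ring

theorem stmt_18
    (a₁ b₁ c₁ d₁ a₂ b₂ c₂ d₂ a₃ b₃ c₃ d₃ : ℝ)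
    (h₁ : b₁^2 + c₁^2 - a₁*d₁ = 1)
    (h₂ : b₂^2 + c₂^2 - a₂*d₂ = 1)
    (h₃ : b₃^2 + c₃^2 - a₃*d₃ = 1)
    (ha₁ : a₁ = 0) (ha₂ : a₂ = 0) (ha₃ : a₃ = 0)
    (Q₁ Q₂ Q₃ : ℝ)
    (hQ₁ : 4*Q₁ = 2 + a₁*d₂ + a₂*d₁ - 2*(b₁*b₂ + c₁*c₂))
    (hQ₂ : 4*Q₂ = 2 + a₂*d₃ + a₃*d₂ - 2*(b₂*b₃ + c₂*c₃))
    (hQ₃ : 4*Q₃ = 2 + a₃*d₁ + a₁*d₃ - 2*(b₃*b₁ + c₃*c₁))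
    (U : ℝ)
    (hU : U = Q₁*(Q₁-2*Q₂) + Q₂*(Q₂-2*Q₃) + Q₃*(Q₃-2*Q₁) + 4*Q₁*Q₂*Q₃) :
    U = 0 := by
  subst ha₁ ha₂ ha₃ hU
  rw [triple_invariant_eq_neg_gram_det_div_four (p₁ := b₁ * b₂ + c₁ * c₂) (p₂ := b₂ * b₃ + c₂ * c₃)
      (p₃ := b₃ * b₁ + c₃ * c₁) (by linarith) (by linarith) (by linarith),
    gram_det_unit_vectors_plane_eq_zero (by linarith) (by linarith) (by linarith)]
  norm_num
end

section
/- For any three normalized circle quadruples K₁, K₂, K₃, one has U ≥ −1/4; equivalently (by the identity 4U = Δ₂² + Δ₃² − Δ₁Δ₄), Δ₂² + Δ₃² − Δ₁Δ₄ ≥ −1. (Although the defining formula for U in terms of Q₁,Q₂,Q₃ alone allows values below −1/4, such values are not realized by any actual triple of circles.) -/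
/-!
Writing `(a, b, c, d) ↦ (((a - d) / 2, b, c), (a + d) / 2)` turns a normalized quadruple into a
unit spacelike vector of Minkowski space `ℝ³ × ℝ`, and then `4 Q(K₁, K₂) = 2 - 2 ⟨K₁, K₂⟩`.
Hence `-4U` is the Gram determinant of `K₁, K₂, K₃`, while `Δ₂² + Δ₃² - Δ₁Δ₄` is the Minkowski
square of their Lorentzian normal `n`, which by Cauchy–Binet is minus that Gram determinant.
If `n` is not timelike the Gram determinant is `≤ 0`. If `n` is timelike, its orthogonal
complement, which contains the `Kᵢ`, is positive definite; so `⟨K₁, K₂⟩² ≤ 1`, and then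
`det G = 1 - (xy - z)² - x² - y² (1 - x²) ≤ 1` for the pairwise products `x, y, z`.
-/

open Matrix

def minkowski {ι : Type*} [Fintype ι] (v w : (ι → ℝ) × ℝ) : ℝ :=
  v.1 ⬝ᵥ w.1 - v.2 * w.2

lemma minkowski_comm {ι : Type*} [Fintype ι] (v w : (ι → ℝ) × ℝ) :
    minkowski v w = minkowski w v := by
  simp only [minkowski, dotProduct_comm, mul_comm]

lemma minkowski_self_nonneg_of_timelike_of_orthogonal {ι : Type*} [Fintype ι]
    {v n : (ι → ℝ) × ℝ} (hn : minkowski n n < 0) (hvn : minkowski v n = 0) :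
    0 ≤ minkowski v v := by
  obtain ⟨P, t⟩ := v
  obtain ⟨w, D⟩ := n
  simp only [minkowski, dotProduct, ← sq] at hn hvn ⊢
  have hww : 0 ≤ ∑ i, w i ^ 2 := Finset.sum_nonneg fun i _ => sq_nonneg (w i)
  have hD : 0 < D ^ 2 := by linarith
  have hPP : 0 ≤ ∑ i, P i ^ 2 := Finset.sum_nonneg fun i _ => sq_nonneg (P i)
  have cauchy_schwarz := Finset.sum_mul_sq_le_sq_mul_sq Finset.univ P w
  have hscaled : t ^ 2 * D ^ 2 ≤ (∑ i, P i ^ 2) * D ^ 2 := by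
    calc t ^ 2 * D ^ 2 = (∑ i, P i * w i) ^ 2 := by rw [sub_eq_zero.mp hvn]; ring
      _ ≤ (∑ i, P i ^ 2) * ∑ i, w i ^ 2 := cauchy_schwarz
      _ ≤ (∑ i, P i ^ 2) * D ^ 2 := mul_le_mul_of_nonneg_left (by linarith) hPP
  linarith [le_of_mul_le_mul_right hscaled hD]

/-- The Minkowski analogue of the cross product, for three vectors of `ℝ³ × ℝ`. -/
def lorentzNormal (v : Fin 3 → (Fin 3 → ℝ) × ℝ) : (Fin 3 → ℝ) × ℝ :=
  ((v 0).2 • ((v 1).1 ⨯₃ (v 2).1) + (v 1).2 • ((v 2).1 ⨯₃ (v 0).1) +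
      (v 2).2 • ((v 0).1 ⨯₃ (v 1).1),
    det (Matrix.of fun i => (v i).1))

lemma minkowski_lorentzNormal (v : Fin 3 → (Fin 3 → ℝ) × ℝ) (i : Fin 3) :
    minkowski (v i) (lorentzNormal v) = 0 := by
  fin_cases i <;>
  · simp only [Fin.zero_eta, Fin.mk_one, Fin.reduceFinMk, minkowski, lorentzNormal, dotProduct,
      Fin.sum_univ_three, det_fin_three, cross_apply, of_apply, Pi.add_apply, Pi.smul_apply,
      smul_eq_mul, cons_val_zero, cons_val_one, cons_val]
    ring

lemma det_gram_eq_neg_minkowski_lorentzNormal (v : Fin 3 → (Fin 3 → ℝ) × ℝ) :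
    det (Matrix.of fun i j => minkowski (v i) (v j)) =
      -minkowski (lorentzNormal v) (lorentzNormal v) := by
  simp only [minkowski, lorentzNormal, dotProduct, Fin.sum_univ_three, det_fin_three, cross_apply,
    of_apply, Pi.add_apply, Pi.smul_apply, smul_eq_mul, cons_val_zero, cons_val_one, cons_val]
  ring

lemma det_gram_of_unit (v : Fin 3 → (Fin 3 → ℝ) × ℝ) (hv : ∀ i, minkowski (v i) (v i) = 1) :
    det (Matrix.of fun i j => minkowski (v i) (v j)) =
      1 - minkowski (v 0) (v 1) ^ 2 - minkowski (v 1) (v 2) ^ 2 - minkowski (v 2) (v 0) ^ 2 +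
        2 * minkowski (v 0) (v 1) * minkowski (v 1) (v 2) * minkowski (v 2) (v 0) := by
  rw [det_fin_three]
  simp only [Matrix.of_apply, hv, minkowski_comm (v 1) (v 0), minkowski_comm (v 2) (v 1),
    minkowski_comm (v 0) (v 2)]
  ring

lemma sq_minkowski_le_one_of_orthogonal_of_timelike {ι : Type*} [Fintype ι]
    {u v n : (ι → ℝ) × ℝ} (hn : minkowski n n < 0) (hun : minkowski u n = 0)
    (hvn : minkowski v n = 0) (hu : minkowski u u = 1) (hv : minkowski v v = 1) :
    minkowski u v ^ 2 ≤ 1 := by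
  set x := minkowski u v with hx
  have horth : minkowski (u - x • v) n = 0 := by
    simp only [minkowski, Prod.fst_sub, Prod.snd_sub, Prod.smul_fst, Prod.smul_snd,
      sub_dotProduct, smul_dotProduct, smul_eq_mul] at hun hvn ⊢
    linear_combination hun - x * hvn
  have hself : minkowski (u - x • v) (u - x • v) = 1 - x ^ 2 := by
    simp only [minkowski, Prod.fst_sub, Prod.snd_sub, Prod.smul_fst, Prod.smul_snd,
      sub_dotProduct, dotProduct_sub, smul_dotProduct, dotProduct_smul, smul_eq_mul,
      dotProduct_comm v.1 u.1] at hu hv hx ⊢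
    linear_combination hu + x ^ 2 * hv + 2 * x * hx
  linarith [minkowski_self_nonneg_of_timelike_of_orthogonal hn horth]

lemma det_gram_le_one (v : Fin 3 → (Fin 3 → ℝ) × ℝ) (hv : ∀ i, minkowski (v i) (v i) = 1) :
    det (Matrix.of fun i j => minkowski (v i) (v j)) ≤ 1 := by
  by_cases hn : minkowski (lorentzNormal v) (lorentzNormal v) < 0
  · have hx := sq_minkowski_le_one_of_orthogonal_of_timelike hn (minkowski_lorentzNormal v 0)
      (minkowski_lorentzNormal v 1) (hv 0) (hv 1)
    rw [det_gram_of_unit v hv]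
    nlinarith [sq_nonneg (minkowski (v 0) (v 1) * minkowski (v 1) (v 2) - minkowski (v 2) (v 0)),
      mul_nonneg (sq_nonneg (minkowski (v 1) (v 2))) (sub_nonneg.mpr hx)]
  · rw [det_gram_eq_neg_minkowski_lorentzNormal]
    linarith

noncomputable def circleVector (a b c d : ℝ) : (Fin 3 → ℝ) × ℝ :=
  (![(a - d) / 2, b, c], (a + d) / 2)

lemma minkowski_circleVector (a b c d a' b' c' d' : ℝ) :
    minkowski (circleVector a b c d) (circleVector a' b' c' d') =
      b * b' + c * c' - (a * d' + a' * d) / 2 := by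
  simp only [circleVector, minkowski, dotProduct, Fin.sum_univ_three, cons_val_zero, cons_val_one,
    cons_val]
  ring

theorem stmt_19
    (a₁ b₁ c₁ d₁ a₂ b₂ c₂ d₂ a₃ b₃ c₃ d₃ : ℝ)
    (h₁ : b₁^2 + c₁^2 - a₁*d₁ = 1)
    (h₂ : b₂^2 + c₂^2 - a₂*d₂ = 1)
    (h₃ : b₃^2 + c₃^2 - a₃*d₃ = 1)
    (Q₁ Q₂ Q₃ : ℝ)
    (hQ₁ : 4*Q₁ = 2 + a₁*d₂ + a₂*d₁ - 2*(b₁*b₂ + c₁*c₂))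
    (hQ₂ : 4*Q₂ = 2 + a₂*d₃ + a₃*d₂ - 2*(b₂*b₃ + c₂*c₃))
    (hQ₃ : 4*Q₃ = 2 + a₃*d₁ + a₁*d₃ - 2*(b₃*b₁ + c₃*c₁))
    (U : ℝ)
    (hU : U = Q₁*(Q₁-2*Q₂) + Q₂*(Q₂-2*Q₃) + Q₃*(Q₃-2*Q₁) + 4*Q₁*Q₂*Q₃)
    (Δ₁ Δ₂ Δ₃ Δ₄ : ℝ)
    (hΔ₁ : Δ₁ = -Matrix.det !![b₁,c₁,d₁; b₂,c₂,d₂; b₃,c₃,d₃])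
    (hΔ₂ : Δ₂ = -(1/2) * Matrix.det !![a₁,c₁,d₁; a₂,c₂,d₂; a₃,c₃,d₃])
    (hΔ₃ : Δ₃ = (1/2) * Matrix.det !![a₁,b₁,d₁; a₂,b₂,d₂; a₃,b₃,d₃])
    (hΔ₄ : Δ₄ = Matrix.det !![a₁,b₁,c₁; a₂,b₂,c₂; a₃,b₃,c₃]) :
    -(1/4) ≤ U ∧ -1 ≤ Δ₂^2 + Δ₃^2 - Δ₁*Δ₄ := by
  set v : Fin 3 → (Fin 3 → ℝ) × ℝ :=
    ![circleVector a₁ b₁ c₁ d₁, circleVector a₂ b₂ c₂ d₂, circleVector a₃ b₃ c₃ d₃]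
  have hv : ∀ i, minkowski (v i) (v i) = 1 := by
    intro i
    fin_cases i <;> simp only [Fin.zero_eta, Fin.mk_one, Fin.reduceFinMk, v, cons_val_zero,
      cons_val_one, cons_val, minkowski_circleVector]
    · linear_combination h₁
    · linear_combination h₂
    · linear_combination h₃
  have hv₀₁ : minkowski (v 0) (v 1) = 1 - 2 * Q₁ := by
    simp only [v, cons_val_zero, cons_val_one, minkowski_circleVector]
    linear_combination (1/2 : ℝ) * hQ₁
  have hv₁₂ : minkowski (v 1) (v 2) = 1 - 2 * Q₂ := by
    simp only [v, cons_val_zero, cons_val_one, cons_val, minkowski_circleVector]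
    linear_combination (1/2 : ℝ) * hQ₂
  have hv₂₀ : minkowski (v 2) (v 0) = 1 - 2 * Q₃ := by
    simp only [v, cons_val_zero, cons_val, minkowski_circleVector]
    linear_combination (1/2 : ℝ) * hQ₃
  have hU_gram : 4 * U = -det (Matrix.of fun i j => minkowski (v i) (v j)) := by
    rw [det_gram_of_unit v hv, hv₀₁, hv₁₂, hv₂₀]
    linear_combination 4 * hU
  have hΔ_normal : Δ₂^2 + Δ₃^2 - Δ₁*Δ₄ = minkowski (lorentzNormal v) (lorentzNormal v) := by
    simp only [hΔ₁, hΔ₂, hΔ₃, hΔ₄, v, circleVector, minkowski, lorentzNormal, dotProduct,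
      Fin.sum_univ_three, det_fin_three, cross_apply, of_apply, Pi.add_apply, Pi.smul_apply,
      smul_eq_mul, cons_val_zero, cons_val_one, cons_val]
    ring
  have hG := det_gram_le_one v hv
  rw [det_gram_eq_neg_minkowski_lorentzNormal] at hG hU_gram
  constructor <;> linarith
end
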